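/- arXiv:1904.12801 — 6 statements merged into one kernel-verified Lean document; each statement's English description precedes it below -/
import Mathlib

section
/- Let Q be a quandle, let α be a congruence of Q, and fix a ∈ Q. Then Dis(Q) acts transitively on Q if and only if both of the following hold: (1) for all x, y ∈ Q there exists g ∈ Dis(Q) with (g x) α y (i.e. the quotient quandle Q/α is connected); and (2) for every b ∈ Q with b α a there exists h ∈ Dis(Q) with h a = b (i.e. the setwise stabilizer of the α-class of a in Dis(Q) acts transitively on that class). -/
open Quandles

/-- Left multiplication by `a` as a permutation of the quandle. -/
def QL {Q : Type*} [Quandle Q] (a : Q) : Equiv.Perm Q := Rack.act' a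

/-- The displacement group of a quandle: the subgroup of `Equiv.Perm Q`
generated by `{L a * (L b)⁻¹ : a, b ∈ Q}`. -/
def Dis (Q : Type*) [Quandle Q] : Subgroup (Equiv.Perm Q) :=
  Subgroup.closure {g : Equiv.Perm Q | ∃ a b : Q, g = QL a * (QL b)⁻¹}


/-- A congruence of a quandle: an equivalence relation compatible with `◃` and `◃⁻¹`. -/
structure QuandleCongruence (Q : Type*) [Quandle Q] where
  rel : Q → Q → Prop
  iseqv : Equivalence rel
  act_compat : ∀ {a b c d : Q}, rel a b → rel c d → rel (a ◃ c) (b ◃ d)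
  invAct_compat : ∀ {a b c d : Q}, rel a b → rel c d → rel (a ◃⁻¹ c) (b ◃⁻¹ d)


theorem stmt0 (Q : Type*) [Quandle Q] (α : QuandleCongruence Q) (a : Q) :
    (∀ x y : Q, ∃ g ∈ Dis Q, g x = y) ↔
      ((∀ x y : Q, ∃ g ∈ Dis Q, α.rel (g x) y) ∧
        (∀ b : Q, α.rel b a → ∃ h ∈ Dis Q, h a = b)) := by
  constructor
  · intro htrans
    refine ⟨fun x y => ?_, fun b _ => htrans a b⟩
    obtain ⟨g, hg, hgx⟩ := htrans x y
    exact ⟨g, hg, hgx ▸ α.iseqv.refl y⟩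
  · rintro ⟨h1, h2⟩ x y
    obtain ⟨g₁, hg₁, hr₁⟩ := h1 x a
    obtain ⟨g₂, hg₂, hr₂⟩ := h1 y a
    obtain ⟨h₁, hh₁, he₁⟩ := h2 (g₁ x) hr₁
    obtain ⟨h₂, hh₂, he₂⟩ := h2 (g₂ y) hr₂
    refine ⟨g₂⁻¹ * h₂ * h₁⁻¹ * g₁, ?_, ?_⟩
    · exact mul_mem (mul_mem (mul_mem (inv_mem hg₂) hh₂) (inv_mem hh₁)) hg₁
    · simp only [Equiv.Perm.mul_apply]
      rw [← he₁, Equiv.Perm.inv_def h₁, Equiv.symm_apply_apply, he₂, Equiv.Perm.inv_def g₂, Equiv.symm_apply_apply]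
end

section
/- Let Q be a finite connected quandle and a ∈ Q. Then the subgroup of Equiv.Perm Q generated by the set {g * (L a) * g⁻¹ * (L a)⁻¹ : g ∈ Dis(Q)} equals Dis(Q). (In the paper's notation: [Dis(Q), conjugation by L a] = Dis(Q).) -/
/-
Every displacement `h` is an automorphism of `Q`, so conjugating `L a` by it gives `L (h a)`;
hence `h L_a h⁻¹ L_a⁻¹ = L_{h a} L_a⁻¹`. By connectedness `h a` ranges over all of `Q`, and the
elements `L_x L_a⁻¹` (for fixed `a`) already generate `Dis(Q)`, since
`L_b L_c⁻¹ = (L_b L_a⁻¹)(L_c L_a⁻¹)⁻¹`.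
-/

open Quandles

def autPerm (Q : Type*) [Shelf Q] : Subgroup (Equiv.Perm Q) where
  carrier := {g | ∀ x y, g (x ◃ y) = g x ◃ g y}
  mul_mem' {g h} hg hh x y := by
    simp only [Equiv.Perm.mul_apply, hh x y, hg (h x) (h y)]
  one_mem' _ _ := rfl
  inv_mem' {g} hg x y := g.injective <| by
    rw [hg (g⁻¹ x) (g⁻¹ y)]
    simp only [Equiv.Perm.coe_inv, Equiv.apply_symm_apply]

lemma QL_apply {Q : Type*} [Quandle Q] (a b : Q) : QL a b = a ◃ b := rfl

lemma QL_mem_autPerm {Q : Type*} [Quandle Q] (a : Q) : QL a ∈ autPerm Q :=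
  fun _ _ => Shelf.self_distrib

lemma mul_QL_mul_inv_of_mem_autPerm {Q : Type*} [Quandle Q] {g : Equiv.Perm Q}
    (hg : g ∈ autPerm Q) (a : Q) : g * QL a * g⁻¹ = QL (g a) := by
  ext y
  simp only [Equiv.Perm.coe_mul, Function.comp_apply, QL_apply, hg a, Equiv.Perm.coe_inv,
    Equiv.apply_symm_apply]

lemma Dis_le_autPerm (Q : Type*) [Quandle Q] : Dis Q ≤ autPerm Q := by
  refine (Subgroup.closure_le _).2 ?_
  rintro _ ⟨a, b, rfl⟩
  exact mul_mem (QL_mem_autPerm a) (inv_mem (QL_mem_autPerm b))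

lemma QL_mul_inv_mem_Dis {Q : Type*} [Quandle Q] (a b : Q) : QL a * (QL b)⁻¹ ∈ Dis Q :=
  Subgroup.subset_closure ⟨a, b, rfl⟩

lemma Dis_eq_closure_QL_mul_inv {Q : Type*} [Quandle Q] (a : Q) :
    Dis Q = Subgroup.closure {g : Equiv.Perm Q | ∃ x : Q, g = QL x * (QL a)⁻¹} := by
  refine le_antisymm ((Subgroup.closure_le _).2 ?_) ((Subgroup.closure_le _).2 ?_)
  · rintro _ ⟨b, c, rfl⟩
    have : QL b * (QL c)⁻¹ = (QL b * (QL a)⁻¹) * (QL c * (QL a)⁻¹)⁻¹ := by group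
    rw [this]
    exact mul_mem (Subgroup.subset_closure ⟨b, rfl⟩) (inv_mem (Subgroup.subset_closure ⟨c, rfl⟩))
  · rintro _ ⟨x, rfl⟩
    exact QL_mul_inv_mem_Dis x a

theorem stmt1_general (Q : Type*) [Quandle Q]
    (hconn : ∀ x y : Q, ∃ g ∈ Dis Q, g x = y) (a : Q) :
    Subgroup.closure
        {g : Equiv.Perm Q | ∃ h ∈ Dis Q, g = h * QL a * h⁻¹ * (QL a)⁻¹} = Dis Q := by
  have commutator_eq {h : Equiv.Perm Q} (hh : h ∈ Dis Q) :
      h * QL a * h⁻¹ * (QL a)⁻¹ = QL (h a) * (QL a)⁻¹ := by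
    rw [mul_QL_mul_inv_of_mem_autPerm (Dis_le_autPerm Q hh)]
  refine le_antisymm ((Subgroup.closure_le _).2 ?_) ?_
  · rintro _ ⟨h, hh, rfl⟩
    rw [commutator_eq hh]
    exact QL_mul_inv_mem_Dis (h a) a
  · refine (Dis_eq_closure_QL_mul_inv a).trans_le (Subgroup.closure_mono ?_)
    rintro _ ⟨x, rfl⟩
    obtain ⟨h, hh, rfl⟩ := hconn a x
    exact ⟨h, hh, (commutator_eq hh).symm⟩

theorem stmt1 (Q : Type*) [Quandle Q] [Finite Q]
    (hconn : ∀ x y : Q, ∃ g ∈ Dis Q, g x = y) (a : Q) :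
    Subgroup.closure
        {g : Equiv.Perm Q | ∃ h ∈ Dis Q, g = h * QL a * h⁻¹ * (QL a)⁻¹} = Dis Q :=
  stmt1_general Q hconn a
end

section
/- (Derived subgroup Lemma.) Let Q be a finite connected quandle. Then for every a ∈ Q, the stabilizer of a in Dis(Q) is contained in the commutator subgroup of Dis(Q): every h ∈ Dis(Q) with h a = a lies in ⁅Dis(Q), Dis(Q)⁆. -/
open Quandles

section Aux

variable {Q : Type*} [Quandle Q]

lemma QL_conj (v x : Q) : QL v * QL x * (QL v)⁻¹ = QL (QL v x) := by
  have := (Rack.ad_conj v x).symm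
  simpa [QL, Rack.act'_apply] using this

lemma QL_conj_inv (v x : Q) : (QL v)⁻¹ * QL x * QL v = QL ((QL v)⁻¹ x) := by
  have h := QL_conj v ((QL v)⁻¹ x)
  rw [show (QL v) ((QL v)⁻¹ x) = x from Equiv.apply_symm_apply _ _] at h
  rw [← h]
  group

/-- Conjugation by elements of the displacement group permutes the translations. -/
lemma dis_conj : ∀ g ∈ Dis Q, ∀ x : Q, g * QL x * g⁻¹ = QL (g x) := by
  intro g hg
  induction hg using Subgroup.closure_induction with
  | mem w hw =>
    obtain ⟨u, v, rfl⟩ := hw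
    intro x
    have h1 : (QL v)⁻¹ * QL x * QL v = QL ((QL v)⁻¹ x) := QL_conj_inv v x
    have h2 : QL u * QL ((QL v)⁻¹ x) * (QL u)⁻¹ = QL (QL u ((QL v)⁻¹ x)) :=
      QL_conj u ((QL v)⁻¹ x)
    have happ : (QL u * (QL v)⁻¹) x = QL u ((QL v)⁻¹ x) := rfl
    rw [happ, ← h2, ← h1]
    group
  | one => intro x; simp
  | mul g g' hg hg' ih ih' =>
    intro x
    have happ : (g * g') x = g (g' x) := rfl
    have : g * g' * QL x * (g * g')⁻¹ = g * (g' * QL x * g'⁻¹) * g⁻¹ := by group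
    rw [this, ih' x, ih (g' x), happ]
  | inv g hg ih =>
    intro x
    have h := ih (g⁻¹ x)
    rw [show g (g⁻¹ x) = x from Equiv.apply_symm_apply _ _] at h
    rw [← h]
    group

lemma mu_mem (x y : Q) : QL x * (QL y)⁻¹ ∈ Dis Q :=
  Subgroup.subset_closure ⟨x, y, rfl⟩

/-- The displacement `L x L y⁻¹` as an element of the displacement group. -/
def muD (x y : Q) : ↥(Dis Q) := ⟨QL x * (QL y)⁻¹, mu_mem x y⟩

lemma muD_cocycle (x y z : Q) : muD x y * muD y z = muD x z := by
  apply Subtype.ext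
  show (QL x * (QL y)⁻¹) * (QL y * (QL z)⁻¹) = QL x * (QL z)⁻¹
  group

lemma muD_self (x : Q) : muD x x = 1 := by
  apply Subtype.ext
  show QL x * (QL x)⁻¹ = 1
  group

lemma muD_inv (x y : Q) : (muD x y)⁻¹ = muD y x := by
  apply Subtype.ext
  show (QL x * (QL y)⁻¹)⁻¹ = QL y * (QL x)⁻¹
  group

/-- The image of `L x L a⁻¹` in the abelianization of the displacement group. -/
def lamD (a x : Q) : Abelianization ↥(Dis Q) := Abelianization.of (muD x a)

lemma lamD_self (a : Q) : lamD a a = 1 := by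
  rw [lamD, muD_self, map_one]

lemma lamD_invariant (a : Q) {d : Equiv.Perm Q} (hd : d ∈ Dis Q) (x y : Q) :
    Abelianization.of (muD (d x) (d y)) = Abelianization.of (muD x y) := by
  have hconj : muD (d x) (d y) = ⟨d, hd⟩ * muD x y * (⟨d, hd⟩ : ↥(Dis Q))⁻¹ := by
    apply Subtype.ext
    show QL (d x) * (QL (d y))⁻¹ = d * (QL x * (QL y)⁻¹) * d⁻¹
    have hx := dis_conj d hd x
    have hy := dis_conj d hd y
    rw [← hx, ← hy]
    group
  rw [hconj, map_mul, map_mul, map_inv,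
    mul_comm (Abelianization.of (⟨d, hd⟩ : ↥(Dis Q))) (Abelianization.of (muD x y)),
    mul_inv_cancel_right]

lemma lamD_shift (a : Q) {d : Equiv.Perm Q} (hd : d ∈ Dis Q) (x : Q) :
    lamD a (d x) = lamD a x * lamD a (d a) := by
  have hsplit : muD (d x) a = muD (d x) (d a) * muD (d a) a := (muD_cocycle _ _ _).symm
  rw [lamD, hsplit, map_mul, lamD_invariant a hd x a]
  rfl

/-- The evaluation homomorphism from the displacement group to its abelianization,
sending `d` to the class of `L (d a) L a⁻¹`. -/
def thetaD (a : Q) : ↥(Dis Q) →* Abelianization ↥(Dis Q) :=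
  MonoidHom.mk' (fun d => lamD a ((d : Equiv.Perm Q) a)) (by
    intro d e
    show lamD a ((d : Equiv.Perm Q) ((e : Equiv.Perm Q) a))
        = lamD a ((d : Equiv.Perm Q) a) * lamD a ((e : Equiv.Perm Q) a)
    rw [lamD_shift a d.2 ((e : Equiv.Perm Q) a), mul_comm])

lemma thetaD_apply (a : Q) (d : ↥(Dis Q)) :
    thetaD a d = lamD a ((d : Equiv.Perm Q) a) := rfl

end Aux

theorem stmt3 (Q : Type*) [Quandle Q] [Finite Q]
    (hconn : ∀ x y : Q, ∃ g ∈ Dis Q, g x = y) :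
    ∀ (a : Q) (h : Equiv.Perm Q), h ∈ Dis Q → h a = a → h ∈ ⁅Dis Q, Dis Q⁆ := by
  intro a h hmem hfix
  -- `lamD a x` is in the range of `thetaD a`, by connectedness.
  have hlam_range : ∀ x : Q, lamD a x ∈ (thetaD a).range := by
    intro x
    obtain ⟨d, hd, hda⟩ := hconn a x
    exact ⟨⟨d, hd⟩, by rw [thetaD_apply]; simp only [hda]⟩
  -- every element of the abelianization is in the range of `thetaD a`.
  have hof_range : ∀ g : ↥(Dis Q), Abelianization.of g ∈ (thetaD a).range := by
    intro g
    have hg : g ∈ Subgroup.closure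
        (((↑) : ↥(Dis Q) → Equiv.Perm Q) ⁻¹'
          {g : Equiv.Perm Q | ∃ a b : Q, g = QL a * (QL b)⁻¹}) := by
      have h2 := Subgroup.closure_closure_coe_preimage
        (k := {g : Equiv.Perm Q | ∃ a b : Q, g = QL a * (QL b)⁻¹})
      exact (Subgroup.eq_top_iff' _).mp h2 g
    induction hg using Subgroup.closure_induction with
    | mem w hw =>
      obtain ⟨x, y, hxy⟩ := hw
      have hw' : w = muD x y := Subtype.ext hxy
      have hsplit : muD x y = muD x a * (muD y a)⁻¹ := by
        rw [muD_inv, muD_cocycle]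
      rw [hw', hsplit, map_mul, map_inv]
      exact mul_mem (hlam_range x) (inv_mem (hlam_range y))
    | one => rw [map_one]; exact one_mem _
    | mul u v hu hv ihu ihv => rw [map_mul]; exact mul_mem ihu ihv
    | inv u hu ihu => rw [map_inv]; exact inv_mem ihu
  have hsurj : Function.Surjective (thetaD a : ↥(Dis Q) →* Abelianization ↥(Dis Q)) := by
    intro x
    obtain ⟨g, rfl⟩ : ∃ g : ↥(Dis Q), Abelianization.of g = x := by
      refine Quotient.inductionOn' x fun g => ⟨g, rfl⟩
    exact hof_range g
  -- finiteness
  have hfinD : Finite ↥(Dis Q) := inferInstance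
  have hfinA : Finite (Abelianization ↥(Dis Q)) := inferInstance
  -- both kernels have the same (finite, nonzero) index
  have hrange_top : (thetaD a).range = ⊤ := MonoidHom.range_eq_top.mpr hsurj
  have hidx_ker : (thetaD a).ker.index = Nat.card (Abelianization ↥(Dis Q)) := by
    rw [Subgroup.index_ker, hrange_top, Subgroup.card_top]
  have hidx_comm : (commutator ↥(Dis Q)).index = Nat.card (Abelianization ↥(Dis Q)) :=
    Subgroup.index_eq_card _
  have hle : commutator ↥(Dis Q) ≤ (thetaD a).ker :=
    Abelianization.commutator_subset_ker (thetaD a)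
  have hne : (thetaD a).ker.index ≠ 0 := Subgroup.index_ne_zero_of_finite
  have hrel := Subgroup.relIndex_mul_index hle
  rw [hidx_ker, hidx_comm] at hrel
  have hone : (commutator ↥(Dis Q)).relIndex (thetaD a).ker = 1 := by
    have hpos : 0 < Nat.card (Abelianization ↥(Dis Q)) := by
      rw [hidx_ker] at hne; omega
    have : (commutator ↥(Dis Q)).relIndex (thetaD a).ker * Nat.card (Abelianization ↥(Dis Q)) =
        1 * Nat.card (Abelianization ↥(Dis Q)) := by rw [one_mul, hrel]
    exact Nat.eq_of_mul_eq_mul_right hpos this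
  have hker_le : (thetaD a).ker ≤ commutator ↥(Dis Q) := Subgroup.relIndex_eq_one.mp hone
  -- h is in the kernel
  have hker : (⟨h, hmem⟩ : ↥(Dis Q)) ∈ (thetaD a).ker := by
    rw [MonoidHom.mem_ker, thetaD_apply]
    show lamD a (h a) = 1
    rw [hfix, lamD_self]
  have hcomm : (⟨h, hmem⟩ : ↥(Dis Q)) ∈ commutator ↥(Dis Q) := hker_le hker
  have hmap : h ∈ Subgroup.map (Dis Q).subtype (commutator ↥(Dis Q)) :=
    ⟨⟨h, hmem⟩, hcomm, rfl⟩
  rwa [commutator_def, Subgroup.map_commutator, ← MonoidHom.range_eq_map,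
    Subgroup.range_subtype] at hmap
end

section
/- Let p be a prime, G a finite p-group, and f an automorphism of G. Suppose the automorphism induced by f on G/Φ(G) has no nontrivial fixed point, i.e. for every g ∈ G, if g⁻¹ * (f g) ∈ Φ(G) then g ∈ Φ(G), where Φ(G) is the Frattini subgroup. Then the subgroup [G,f] generated by {g * (f g)⁻¹ : g ∈ G} equals all of G (so every coset quandle Q(G,H,f) with H contained in the fixed-point subgroup of f is connected). -/
theorem stmt5 (p : ℕ) (hp : p.Prime) (G : Type*) [Group G] [Finite G]
    (hpG : IsPGroup p G) (f : G ≃* G)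
    (hfrat : ∀ g : G, g⁻¹ * f g ∈ frattini G → g ∈ frattini G) :
    Subgroup.closure {x : G | ∃ g : G, x = g * (f g)⁻¹} = ⊤ := by
  set Φ := frattini G
  have hΦchar : Φ.Characteristic := frattini_characteristic
  have hcomap : Φ ≤ Φ.comap f.toMonoidHom := (hΦchar.fixed f).ge
  set V := G ⧸ Φ
  haveI : Φ.Normal := inferInstance
  set π : G →* V := QuotientGroup.mk' Φ
  set fbar : V →* V := QuotientGroup.map Φ Φ f.toMonoidHom hcomap
  have hfbar : ∀ g : G, fbar (π g) = π (f g) := fun g => rfl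
  have hpi : ∀ x y : G, π x = π y ↔ x⁻¹ * y ∈ Φ := by
    intro x y
    constructor
    · intro hxy
      exact QuotientGroup.leftRel_apply.mp (Quotient.exact' hxy)
    · intro hxy
      exact Quotient.sound' (QuotientGroup.leftRel_apply.mpr hxy)
  set ψ : V → V := fun v => v * (fbar v)⁻¹
  have hinj : Function.Injective ψ := by
    intro v w h
    obtain ⟨a, rfl⟩ := QuotientGroup.mk'_surjective Φ v
    obtain ⟨b, rfl⟩ := QuotientGroup.mk'_surjective Φ w
    have h' : π (b⁻¹ * a) = π (f (b⁻¹ * a)) := by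
      have h2 : π a * (π (f a))⁻¹ = π b * (π (f b))⁻¹ := by
        exact h
      have : (π b)⁻¹ * π a = (π (f b))⁻¹ * π (f a) := by
        rw [mul_inv_eq_iff_eq_mul] at h2
        rw [h2]; group
      simpa [map_mul, map_inv] using this
    have hmem : (b⁻¹ * a)⁻¹ * f (b⁻¹ * a) ∈ Φ := (hpi _ _).mp h'
    have hba : b⁻¹ * a ∈ Φ := hfrat _ hmem
    have : π (b⁻¹ * a) = π 1 := by
      rw [hpi]; simpa using (Φ.inv_mem hba)
    have : π a = π b := by
      simp only [map_mul, map_inv, map_one] at this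
      rw [inv_mul_eq_iff_eq_mul] at this
      rw [this]; group
    exact this
  have hsurj : Function.Surjective ψ := Finite.injective_iff_surjective.mp hinj
  set K := Subgroup.closure {x : G | ∃ g : G, x = g * (f g)⁻¹}
  have hsup : K ⊔ Φ = ⊤ := by
    rw [eq_top_iff]
    intro g _
    obtain ⟨v, hv⟩ := hsurj (π g)
    obtain ⟨h, rfl⟩ := QuotientGroup.mk'_surjective Φ v
    have : π (h * (f h)⁻¹) = π g := by
      rw [map_mul, map_inv]; exact hv
    have hmem : (h * (f h)⁻¹)⁻¹ * g ∈ Φ := QuotientGroup.leftRel_apply.mp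
      (Quotient.exact' (by exact this))
    have hk : h * (f h)⁻¹ ∈ K := Subgroup.subset_closure ⟨h, rfl⟩
    have : g = (h * (f h)⁻¹) * ((h * (f h)⁻¹)⁻¹ * g) := by group
    rw [this]
    exact Subgroup.mul_mem_sup hk hmem
  exact frattini_nongenerating hsup
end

section
/- Let Q be a finite faithful connected quandle and α a central congruence of Q. If the quotient quandle Q/α is latin, i.e. (surjectivity) for all a, c ∈ Q there exists b with (b ◃ a) α c, and (injectivity) for all a, b, b' ∈ Q, (b ◃ a) α (b' ◃ a) implies b α b', then Q itself is latin: for every a ∈ Q the map b ↦ b ◃ a is a bijection of Q. -/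
open Quandles

/-- The displacement group relative to a congruence `α`: generated by
`{L x * (L y)⁻¹ : x α y}`. -/
def DisRel (Q : Type*) [Quandle Q] (α : QuandleCongruence Q) : Subgroup (Equiv.Perm Q) :=
  Subgroup.closure {g : Equiv.Perm Q | ∃ x y : Q, α.rel x y ∧ g = QL x * (QL y)⁻¹}

/-- A congruence `α` is central if `Dis_α` is central in `Dis Q` and points related
by `α` have the same stabilizer in `Dis Q`. -/
def IsCentralCongruence (Q : Type*) [Quandle Q] (α : QuandleCongruence Q) : Prop :=
  (∀ g ∈ DisRel Q α, ∀ h ∈ Dis Q, g * h = h * g) ∧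
    ∀ x y : Q, α.rel x y → ∀ h : Equiv.Perm Q, h ∈ Dis Q → (h x = x ↔ h y = y)

/-! If `b ◃ a = b' ◃ a` then `b α b'` by latinity of `Q/α`, so `L b (L b')⁻¹` lies in `Dis_α`.
Being central in the transitive group `Dis Q` and fixing `b' ◃ a`, it fixes every point, so
`L b = L b'` and faithfulness gives `b = b'`. Finiteness turns injectivity into bijectivity. -/

theorem Equiv.Perm.eq_one_of_forall_commute_of_apply_eq_self {X : Type*}
    (H : Subgroup (Equiv.Perm X)) (htrans : ∀ x y : X, ∃ h ∈ H, h x = y)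
    {g : Equiv.Perm X} (hcomm : ∀ h ∈ H, g * h = h * g) {x : X} (hx : g x = x) :
    g = 1 := by
  ext y
  obtain ⟨h, hH, rfl⟩ := htrans x y
  calc g (h x) = (g * h) x := rfl
    _ = (h * g) x := by rw [hcomm h hH]
    _ = h x := by rw [Equiv.Perm.mul_apply, hx]

section

variable {Q : Type*} [Quandle Q]

theorem QL_mul_inv_mem_DisRel (α : QuandleCongruence Q) {x y : Q} (h : α.rel x y) :
    QL x * (QL y)⁻¹ ∈ DisRel Q α :=
  Subgroup.subset_closure ⟨x, y, h, rfl⟩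

theorem QL_mul_inv_apply_act (b b' a : Q) : (QL b * (QL b')⁻¹) (b' ◃ a) = b ◃ a :=
  congrArg (QL b) (Equiv.Perm.inv_eq_iff_eq.mpr rfl)

theorem QL_eq_of_rel_of_act_eq (hconn : ∀ x y : Q, ∃ g ∈ Dis Q, g x = y)
    (α : QuandleCongruence Q) (hcent : IsCentralCongruence Q α) {a b b' : Q}
    (hrel : α.rel b b') (hact : b ◃ a = b' ◃ a) : QL b = QL b' := by
  have hfix : (QL b * (QL b')⁻¹) (b' ◃ a) = b' ◃ a := by
    rw [QL_mul_inv_apply_act, hact]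
  have hone := Equiv.Perm.eq_one_of_forall_commute_of_apply_eq_self (Dis Q) hconn
    (hcent.1 _ (QL_mul_inv_mem_DisRel α hrel)) hfix
  exact mul_inv_eq_one.mp hone

end

theorem stmt8_general (Q : Type*) [Quandle Q] [Finite Q]
    (hfaith : Function.Injective (fun a : Q => QL a))
    (hconn : ∀ x y : Q, ∃ g ∈ Dis Q, g x = y)
    (α : QuandleCongruence Q) (hcent : IsCentralCongruence Q α)
    (hinj : ∀ a b b' : Q, α.rel (b ◃ a) (b' ◃ a) → α.rel b b') :
    ∀ a : Q, Function.Bijective (fun b : Q => b ◃ a) := by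
  intro a
  rw [← Finite.injective_iff_bijective]
  intro b b' (hact : b ◃ a = b' ◃ a)
  have hrel : α.rel b b' := hinj a b b' (hact ▸ α.iseqv.refl _)
  exact hfaith (QL_eq_of_rel_of_act_eq hconn α hcent hrel hact)

theorem stmt8 (Q : Type*) [Quandle Q] [Finite Q]
    (hfaith : Function.Injective (fun a : Q => QL a))
    (hconn : ∀ x y : Q, ∃ g ∈ Dis Q, g x = y)
    (α : QuandleCongruence Q) (hcent : IsCentralCongruence Q α)
    (hsurj : ∀ a c : Q, ∃ b : Q, α.rel (b ◃ a) c)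
    (hinj : ∀ a b b' : Q, α.rel (b ◃ a) (b' ◃ a) → α.rel b b') :
    ∀ a : Q, Function.Bijective (fun b : Q => b ◃ a) :=
  stmt8_general Q hfaith hconn α hcent hinj
end

section
/- (Isomorphism theorem for connected coset quandles.) Let G be a group, let f₁, f₂ be automorphisms of G, and let H₁, H₂ be subgroups of G with f_i h = h for all h ∈ H_i (i = 1, 2). Assume for each i that the subgroup generated by {g * (f_i g)⁻¹ : g ∈ G} is all of G and that the normal core of H_i in G is trivial (these conditions say that the displacement group of the coset quandle Q_i = Q(G, H_i, f_i) is isomorphic to G). Then the coset quandles Q₁ and Q₂ are isomorphic — i.e. there exists a bijection φ : G/H₁ ≃ G/H₂ such that for all a, b, c, d ∈ G, if φ(aH₁) = cH₂ and φ(bH₁) = dH₂ then φ((a·f₁(a⁻¹b))H₁) = (c·f₂(c⁻¹d))H₂ — if and only if there exists an automorphism h of G such that f₂ = h⁻¹ ∘ f₁ ∘ h and h maps H₂ onto H₁. -/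
namespace Stmt19Aux

variable {G : Type*} [Group G]

/-- The coset quandle operation on `G ⧸ H`. -/
def qop (f : G ≃* G) (H : Subgroup G) (hfix : ∀ h ∈ H, f h = h) :
    G ⧸ H → G ⧸ H → G ⧸ H := fun x y =>
  Quotient.liftOn₂' x y (fun a b => ((a * f (a⁻¹ * b) : G) : G ⧸ H)) (by
    intro a b a' b' ha hb
    rw [QuotientGroup.leftRel_apply] at ha hb
    show ((a * f (a⁻¹ * b) : G) : G ⧸ H) = ((a' * f (a'⁻¹ * b') : G) : G ⧸ H)
    set h₁ := a⁻¹ * a' with hh₁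
    set h₂ := b⁻¹ * b' with hh₂
    have ea : a' = a * h₁ := by rw [hh₁]; group
    have eb : b' = b * h₂ := by rw [hh₂]; group
    have e1 : a' * f (a'⁻¹ * b') = a * f (a⁻¹ * b) * h₂ := by
      have e2 : a'⁻¹ * b' = h₁⁻¹ * (a⁻¹ * b) * h₂ := by rw [ea, eb]; group
      rw [e2, map_mul, map_mul, map_inv, hfix _ ha, hfix _ hb, ea]; group
    rw [e1, QuotientGroup.eq]
    simpa only [inv_mul_cancel_left] using hb)

lemma qop_mk (f : G ≃* G) (H : Subgroup G) (hfix : ∀ h ∈ H, f h = h) (a b : G) :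
    qop f H hfix (a : G ⧸ H) (b : G ⧸ H) = ((a * f (a⁻¹ * b) : G) : G ⧸ H) := rfl

lemma smul_mk (H : Subgroup G) (g a : G) :
    g • ((a : G) : G ⧸ H) = ((g * a : G) : G ⧸ H) := rfl

lemma qop_smul (f : G ≃* G) (H : Subgroup G) (hfix : ∀ h ∈ H, f h = h) (g : G)
    (x y : G ⧸ H) : qop f H hfix (g • x) (g • y) = g • qop f H hfix x y := by
  induction x using QuotientGroup.induction_on with
  | H a =>
  induction y using QuotientGroup.induction_on with
  | H b =>
  rw [smul_mk, smul_mk, qop_mk, qop_mk, smul_mk]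
  have : (g * a)⁻¹ * (g * b) = a⁻¹ * b := by group
  rw [this, mul_assoc]

lemma qop_mk_smul (f : G ≃* G) (H : Subgroup G) (hfix : ∀ h ∈ H, f h = h) (c e : G)
    (z : G ⧸ H) :
    qop f H hfix (c : G ⧸ H) z
      = ((c * (f c)⁻¹) * (e * (f e)⁻¹)⁻¹) • qop f H hfix (e : G ⧸ H) z := by
  induction z using QuotientGroup.induction_on with
  | H w =>
  rw [qop_mk, qop_mk, smul_mk]
  have : c * f (c⁻¹ * w) = c * (f c)⁻¹ * (e * (f e)⁻¹)⁻¹ * (e * f (e⁻¹ * w)) := by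
    rw [map_mul, map_inv, map_mul, map_inv]; group
  rw [this]

lemma qop_one_surj (f : G ≃* G) (H : Subgroup G) (hfix : ∀ h ∈ H, f h = h)
    (x : G ⧸ H) : ∃ y, qop f H hfix ((1 : G) : G ⧸ H) y = x := by
  induction x using QuotientGroup.induction_on with
  | H b =>
  refine ⟨((f.symm b : G) : G ⧸ H), ?_⟩
  rw [qop_mk]
  simp

/-- Existence of an equivariance constant for each group element. -/
lemma equiv_ex (f₁ f₂ : G ≃* G) (H₁ H₂ : Subgroup G)
    (hfix₁ : ∀ h ∈ H₁, f₁ h = h) (hfix₂ : ∀ h ∈ H₂, f₂ h = h)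
    (hgen₁ : Subgroup.closure {x : G | ∃ g : G, x = g * (f₁ g)⁻¹} = ⊤)
    (φ : G ⧸ H₁ ≃ G ⧸ H₂)
    (hmorph : ∀ x y, φ (qop f₁ H₁ hfix₁ x y) = qop f₂ H₂ hfix₂ (φ x) (φ y)) :
    ∀ g : G, ∃ g' : G, ∀ x, φ (g • x) = g' • φ x := by
  intro g
  have hg : g ∈ Subgroup.closure {x : G | ∃ g : G, x = g * (f₁ g)⁻¹} := by
    rw [hgen₁]; trivial
  induction hg using Subgroup.closure_induction with
  | mem x hx =>
    obtain ⟨a, rfl⟩ := hx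
    obtain ⟨c, hc⟩ : ∃ c : G, φ ((a : G) : G ⧸ H₁) = (c : G ⧸ H₂) :=
      ⟨(φ ((a : G) : G ⧸ H₁)).out, (QuotientGroup.out_eq' _).symm⟩
    obtain ⟨e, he⟩ : ∃ e : G, φ ((1 : G) : G ⧸ H₁) = (e : G ⧸ H₂) :=
      ⟨(φ ((1 : G) : G ⧸ H₁)).out, (QuotientGroup.out_eq' _).symm⟩
    refine ⟨(c * (f₂ c)⁻¹) * (e * (f₂ e)⁻¹)⁻¹, fun x => ?_⟩
    obtain ⟨y, hy⟩ := qop_one_surj f₁ H₁ hfix₁ x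
    have k1 : (a * (f₁ a)⁻¹) • x = qop f₁ H₁ hfix₁ ((a : G) : G ⧸ H₁) y := by
      rw [← hy, qop_mk_smul f₁ H₁ hfix₁ a 1]
      simp
    rw [k1, hmorph, hc, qop_mk_smul f₂ H₂ hfix₂ c e]
    congr 1
    rw [← he, ← hmorph, hy]
  | one => exact ⟨1, by simp⟩
  | mul x y _ _ hx hy =>
    obtain ⟨x', hx'⟩ := hx
    obtain ⟨y', hy'⟩ := hy
    exact ⟨x' * y', fun z => by rw [mul_smul, hx', hy', mul_smul]⟩
  | inv x _ hx =>
    obtain ⟨x', hx'⟩ := hx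
    refine ⟨x'⁻¹, fun z => ?_⟩
    have := hx' (x⁻¹ • z)
    rw [smul_inv_smul] at this
    rw [this, inv_smul_smul]

end Stmt19Aux

namespace Stmt19Aux

variable {G : Type*} [Group G]

lemma act_triv (H : Subgroup G) (hcore : H.normalCore = ⊥) (g : G)
    (h : ∀ x : G ⧸ H, g • x = x) : g = 1 := by
  have hg : g⁻¹ ∈ H.normalCore := by
    intro b
    have h1 := h ((b⁻¹ : G) : G ⧸ H)
    rw [smul_mk, QuotientGroup.eq] at h1
    have e : b * g⁻¹ * b⁻¹ = (g * b⁻¹)⁻¹ * b⁻¹ := by group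
    rw [e]; exact h1
  rw [hcore, Subgroup.mem_bot] at hg
  rw [← inv_inv g, hg, inv_one]

end Stmt19Aux

open Stmt19Aux
theorem stmt19 (G : Type*) [Group G] (f₁ f₂ : G ≃* G) (H₁ H₂ : Subgroup G)
    (hfix₁ : ∀ h ∈ H₁, f₁ h = h) (hfix₂ : ∀ h ∈ H₂, f₂ h = h)
    (hgen₁ : Subgroup.closure {x : G | ∃ g : G, x = g * (f₁ g)⁻¹} = ⊤)
    (hgen₂ : Subgroup.closure {x : G | ∃ g : G, x = g * (f₂ g)⁻¹} = ⊤)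
    (hcore₁ : H₁.normalCore = ⊥) (hcore₂ : H₂.normalCore = ⊥) :
    (∃ φ : G ⧸ H₁ ≃ G ⧸ H₂,
        ∀ a b c d : G,
          φ (a : G ⧸ H₁) = (c : G ⧸ H₂) → φ (b : G ⧸ H₁) = (d : G ⧸ H₂) →
            φ ((a * f₁ (a⁻¹ * b) : G) : G ⧸ H₁) = ((c * f₂ (c⁻¹ * d) : G) : G ⧸ H₂)) ↔
      ∃ h : G ≃* G, (∀ g : G, f₂ g = h.symm (f₁ (h g))) ∧ H₂.map h.toMonoidHom = H₁ := by
  constructor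
  · rintro ⟨φ, hcond⟩
    have hmorph : ∀ x y, φ (qop f₁ H₁ hfix₁ x y) = qop f₂ H₂ hfix₂ (φ x) (φ y) := by
      intro x y
      obtain ⟨a, rfl⟩ : ∃ a : G, x = (a : G ⧸ H₁) := ⟨x.out, (QuotientGroup.out_eq' x).symm⟩
      obtain ⟨b, rfl⟩ : ∃ b : G, y = (b : G ⧸ H₁) := ⟨y.out, (QuotientGroup.out_eq' y).symm⟩
      obtain ⟨c, hc⟩ : ∃ c : G, φ ((a : G) : G ⧸ H₁) = (c : G ⧸ H₂) :=
        ⟨(φ _).out, (QuotientGroup.out_eq' _).symm⟩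
      obtain ⟨d, hd⟩ : ∃ d : G, φ ((b : G) : G ⧸ H₁) = (d : G ⧸ H₂) :=
        ⟨(φ _).out, (QuotientGroup.out_eq' _).symm⟩
      rw [hc, hd, qop_mk, qop_mk]
      exact hcond a b c d hc hd
    have hmorph' : ∀ x y, φ.symm (qop f₂ H₂ hfix₂ x y)
        = qop f₁ H₁ hfix₁ (φ.symm x) (φ.symm y) := by
      intro x y
      apply φ.injective
      rw [Equiv.apply_symm_apply, hmorph, Equiv.apply_symm_apply, Equiv.apply_symm_apply]
    have hEx := equiv_ex f₁ f₂ H₁ H₂ hfix₁ hfix₂ hgen₁ φ hmorph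
    have hEx' := equiv_ex f₂ f₁ H₂ H₁ hfix₂ hfix₁ hgen₂ φ.symm hmorph'
    have uniq₂ : ∀ g' g'' : G, (∀ z : G ⧸ H₂, g' • z = g'' • z) → g' = g'' := by
      intro g' g'' hz
      have h1 : ∀ z : G ⧸ H₂, (g''⁻¹ * g') • z = z := by
        intro z; rw [mul_smul, hz, inv_smul_smul]
      have h2 := act_triv H₂ hcore₂ _ h1
      exact (inv_mul_eq_one.mp h2).symm
    choose Ψ hΨ using hEx
    choose Χ hΧ using hEx'
    have hΨmul : ∀ g₁ g₂, Ψ (g₁ * g₂) = Ψ g₁ * Ψ g₂ := by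
      intro g₁ g₂
      apply uniq₂
      intro z
      rw [← Equiv.apply_symm_apply φ z, ← hΨ, mul_smul, hΨ, hΨ, mul_smul]
    have hΨΧ : ∀ g, Ψ (Χ g) = g := by
      intro g
      apply uniq₂
      intro z
      calc Ψ (Χ g) • z = Ψ (Χ g) • φ (φ.symm z) := by rw [Equiv.apply_symm_apply]
        _ = φ (Χ g • φ.symm z) := (hΨ _ _).symm
        _ = φ (φ.symm (g • z)) := by rw [← hΧ]
        _ = g • z := by rw [Equiv.apply_symm_apply]
    let ψ₀ : G →* G := MonoidHom.mk' Ψ hΨmul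
    have hΨinj : Function.Injective Ψ := by
      have h1 : ∀ g, Ψ g = 1 → g = 1 := by
        intro g hg
        apply act_triv H₁ hcore₁
        intro x
        apply φ.injective
        rw [hΨ, hg, one_smul]
      exact (injective_iff_map_eq_one ψ₀).mpr h1
    have hΨ1 : Ψ 1 = 1 := ψ₀.map_one
    let ψ : G ≃* G := MulEquiv.ofBijective ψ₀ ⟨hΨinj, fun g => ⟨Χ g, hΨΧ g⟩⟩
    obtain ⟨c₀, hc₀⟩ : ∃ c₀ : G, φ ((1 : G) : G ⧸ H₁) = (c₀ : G ⧸ H₂) :=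
      ⟨(φ _).out, (QuotientGroup.out_eq' _).symm⟩
    have hφmk : ∀ g : G, φ ((g : G) : G ⧸ H₁) = ((Ψ g * c₀ : G) : G ⧸ H₂) := by
      intro g
      have h1 : ((g : G) : G ⧸ H₁) = g • ((1 : G) : G ⧸ H₁) := by
        rw [smul_mk, mul_one]
      rw [h1, hΨ, hc₀, smul_mk]
    let θ : G ≃* G := ψ.trans (MulAut.conj c₀⁻¹)
    have hθ : ∀ g, θ g = c₀⁻¹ * Ψ g * c₀ := by
      intro g
      show c₀⁻¹ * Ψ g * c₀⁻¹⁻¹ = c₀⁻¹ * Ψ g * c₀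
      rw [inv_inv]
    have memiff : ∀ g, g ∈ H₁ ↔ θ g ∈ H₂ := by
      intro g
      have e1 : ((g : G) : G ⧸ H₁) = ((1 : G) : G ⧸ H₁) ↔ g ∈ H₁ := by
        rw [QuotientGroup.eq, mul_one, inv_mem_iff]
      have e2 : ((Ψ g * c₀ : G) : G ⧸ H₂) = ((c₀ : G) : G ⧸ H₂) ↔ θ g ∈ H₂ := by
        have e3 : (Ψ g * c₀)⁻¹ * c₀ = (θ g)⁻¹ := by rw [hθ]; group
        rw [QuotientGroup.eq, e3, inv_mem_iff]
      rw [← e1, ← Equiv.apply_eq_iff_eq φ, hφmk, hc₀, e2]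
    have hfix₂' : ∀ k ∈ H₂, f₂.symm k = k := by
      intro k hk
      calc f₂.symm k = f₂.symm (f₂ k) := (congrArg f₂.symm (hfix₂ k hk)).symm
        _ = k := f₂.symm_apply_apply k
    have qrel : ∀ u : G, (θ u)⁻¹ * f₂.symm (θ (f₁ u)) ∈ H₂ := by
      intro u
      have hm := hmorph ((1 : G) : G ⧸ H₁) ((u : G) : G ⧸ H₁)
      have l1 : qop f₁ H₁ hfix₁ ((1 : G) : G ⧸ H₁) ((u : G) : G ⧸ H₁)
          = ((f₁ u : G) : G ⧸ H₁) := by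
        rw [qop_mk]; simp
      rw [l1, hφmk, hφmk, hφmk, qop_mk] at hm
      have harg : (Ψ 1 * c₀)⁻¹ * (Ψ u * c₀) = θ u := by rw [hΨ1, hθ]; group
      rw [harg] at hm
      have key := QuotientGroup.eq.mp hm
      have h2 : (θ (f₁ u))⁻¹ * f₂ (θ u) ∈ H₂ := by
        have e : (Ψ (f₁ u) * c₀)⁻¹ * (Ψ 1 * c₀ * f₂ (θ u)) = (θ (f₁ u))⁻¹ * f₂ (θ u) := by
          rw [hΨ1, hθ (f₁ u)]; group
        rw [← e]; exact key
      have h3 : (f₂ (θ u))⁻¹ * θ (f₁ u) ∈ H₂ := by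
        have h4 := H₂.inv_mem h2
        rwa [mul_inv_rev, inv_inv] at h4
      have h5 : f₂.symm ((f₂ (θ u))⁻¹ * θ (f₁ u)) = (θ u)⁻¹ * f₂.symm (θ (f₁ u)) := by
        rw [map_mul, map_inv, MulEquiv.symm_apply_apply]
      rw [← h5, hfix₂' _ h3]
      exact h3
    have hBmul : ∀ v w : G, f₂.symm (θ (f₁ (θ.symm (v * w))))
        = f₂.symm (θ (f₁ (θ.symm v))) * f₂.symm (θ (f₁ (θ.symm w))) := by
      intro v w; rw [map_mul, map_mul, map_mul, map_mul]
    have hc : ∀ v : G, v⁻¹ * f₂.symm (θ (f₁ (θ.symm v))) ∈ H₂ := by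
      intro v
      have h1 := qrel (θ.symm v)
      rwa [MulEquiv.apply_symm_apply] at h1
    have hB1 : ∀ v : G, f₂.symm (θ (f₁ (θ.symm v))) = v := by
      intro v
      have hnc : v⁻¹ * f₂.symm (θ (f₁ (θ.symm v))) ∈ H₂.normalCore := by
        intro w
        have h1 := hc (v * w⁻¹)
        have h2 := hc w⁻¹
        have e : w * (v⁻¹ * f₂.symm (θ (f₁ (θ.symm v)))) * w⁻¹
            = ((v * w⁻¹)⁻¹ * f₂.symm (θ (f₁ (θ.symm (v * w⁻¹)))))
              * ((w⁻¹)⁻¹ * f₂.symm (θ (f₁ (θ.symm w⁻¹))))⁻¹ := by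
          rw [hBmul]; group
        rw [e]; exact H₂.mul_mem h1 (H₂.inv_mem h2)
      rw [hcore₂, Subgroup.mem_bot] at hnc
      exact (inv_mul_eq_one.mp hnc).symm
    refine ⟨θ.symm, ?_, ?_⟩
    · intro g
      have h1 := congrArg f₂ (hB1 g)
      rw [MulEquiv.apply_symm_apply] at h1
      rw [MulEquiv.symm_symm]
      exact h1.symm
    · ext g
      simp only [Subgroup.mem_map, MulEquiv.coe_toMonoidHom]
      constructor
      · rintro ⟨x, hx, rfl⟩
        rw [memiff, MulEquiv.apply_symm_apply]
        exact hx
      · intro hg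
        exact ⟨θ g, (memiff g).mp hg, θ.symm_apply_apply g⟩
  · rintro ⟨h, hf, hmap⟩
    have hmem : ∀ g : G, h.symm g ∈ H₂ ↔ g ∈ H₁ := by
      intro g
      rw [← hmap]
      simp only [Subgroup.mem_map, MulEquiv.coe_toMonoidHom]
      constructor
      · intro hg
        exact ⟨h.symm g, hg, h.apply_symm_apply g⟩
      · rintro ⟨x, hx, rfl⟩
        rwa [h.symm_apply_apply]
    have hsf : ∀ x : G, h.symm (f₁ x) = f₂ (h.symm x) := by
      intro x
      rw [hf (h.symm x), h.apply_symm_apply]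
    have wd1 : ∀ a b : G, @Setoid.r _ (QuotientGroup.leftRel H₁) a b →
        ((h.symm a : G) : G ⧸ H₂) = ((h.symm b : G) : G ⧸ H₂) := by
      intro a b hab
      rw [QuotientGroup.leftRel_apply] at hab
      rw [QuotientGroup.eq, ← map_inv, ← map_mul]
      exact (hmem _).mpr hab
    have wd2 : ∀ a b : G, @Setoid.r _ (QuotientGroup.leftRel H₂) a b →
        ((h a : G) : G ⧸ H₁) = ((h b : G) : G ⧸ H₁) := by
      intro a b hab
      rw [QuotientGroup.leftRel_apply] at hab
      rw [QuotientGroup.eq]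
      have e : (h a)⁻¹ * h b = h (a⁻¹ * b) := by rw [map_mul, map_inv]
      rw [e, ← hmem, h.symm_apply_apply]
      exact hab
    let F : G ⧸ H₁ → G ⧸ H₂ := fun x =>
      Quotient.liftOn' x (fun a => ((h.symm a : G) : G ⧸ H₂)) wd1
    let Finv : G ⧸ H₂ → G ⧸ H₁ := fun x =>
      Quotient.liftOn' x (fun a => ((h a : G) : G ⧸ H₁)) wd2
    have hF : ∀ a : G, F ((a : G) : G ⧸ H₁) = ((h.symm a : G) : G ⧸ H₂) := fun a => rfl
    have hFinv : ∀ a : G, Finv ((a : G) : G ⧸ H₂) = ((h a : G) : G ⧸ H₁) := fun a => rfl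
    refine ⟨⟨F, Finv, ?_, ?_⟩, ?_⟩
    · intro x
      induction x using QuotientGroup.induction_on with
      | H a => rw [hF, hFinv, h.apply_symm_apply]
    · intro x
      induction x using QuotientGroup.induction_on with
      | H a => rw [hFinv, hF, h.symm_apply_apply]
    · intro a b c d h1 h2
      simp only [Equiv.coe_fn_mk] at h1 h2 ⊢
      rw [hF] at h1 h2 ⊢
      have e : h.symm (a * f₁ (a⁻¹ * b)) = h.symm a * f₂ ((h.symm a)⁻¹ * h.symm b) := by
        rw [map_mul, hsf, map_mul, map_inv]
      have e2 : ((h.symm (a * f₁ (a⁻¹ * b)) : G) : G ⧸ H₂)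
          = qop f₂ H₂ hfix₂ ((h.symm a : G) : G ⧸ H₂) ((h.symm b : G) : G ⧸ H₂) := by
        rw [qop_mk, e]
      rw [e2, h1, h2, qop_mk]
end
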